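/- arXiv:2008.13260 — 2 statements merged into one kernel-verified Lean document; each statement's English description precedes it below -/
import Mathlib

section
/- Let f be a perfect k-coloring of the Hamming graph H(n,3) with quotient matrix S, let λ_0 > λ_1 > … > λ_l be the distinct eigenvalues of S, and let i be any color. Then there exists a unique tuple of real numbers (a_1,…,a_l) such that for every t = 0,1,…,l−1: Σ_{j=1}^{l} λ_j^t · a_j = |f^{-1}(i)| · (S^t)_{i,i} − (|f^{-1}(i)|² / 3^n) · λ_0^t (where (S^0)_{i,i} = 1); moreover, for every j = 1,…,l the number 3^n · a_j is a non-negative integer. -/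
/-- The Hamming graph `H(n,q)`: vertices are `Fin n → ZMod q`, two vertices are
adjacent iff their Hamming distance is `1`. -/
def hammingGraph (n q : ℕ) : SimpleGraph (Fin n → ZMod q) where
  Adj x y := hammingDist x y = 1
  symm := by constructor; intro x y h; rwa [hammingDist_comm]
  loopless := by constructor; intro x h; simp [hammingDist_self] at h

/-- The distance from a vertex `x` to a code `C` in a graph `G`. -/
noncomputable def distToCode {V : Type*} (G : SimpleGraph V) (C : Set V) (x : V) : ℕ :=
  sInf {d : ℕ | ∃ c ∈ C, G.dist x c = d}

/-- The code distance of a code `C` in a graph `G`: the minimum distance between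
two distinct codewords. -/
noncomputable def codeDist {V : Type*} (G : SimpleGraph V) (C : Set V) : ℕ :=
  sInf {d : ℕ | ∃ x ∈ C, ∃ y ∈ C, x ≠ y ∧ G.dist x y = d}

/-- A code `C` is `1`-perfect if every vertex is at distance at most `1`
from exactly one codeword. -/
def IsOnePerfect {V : Type*} (G : SimpleGraph V) (C : Set V) : Prop :=
  ∀ x, ∃! c, c ∈ C ∧ G.dist x c ≤ 1

/-- Deleting the `i`-th coordinate of a tuple. -/
def deleteCoord {α : Type*} {n : ℕ} (i : Fin n) (c : Fin n → α) (j : Fin (n - 1)) : α :=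
  c (Fin.cast (show n - 1 + 1 = n by have := i.pos; omega)
      ((Fin.cast (show n = n - 1 + 1 by have := i.pos; omega) i).succAbove j))

/-- The projection (puncturing) of a code in `H(n,q)` at coordinate `i`. -/
def hammingProj {n q : ℕ} (i : Fin n) (C : Set (Fin n → ZMod q)) :
    Set (Fin (n - 1) → ZMod q) :=
  (deleteCoord i) '' C

/-- A code `C` in `H(n,q)` is extended `1`-perfect if it is nonempty, its code distance
is `4`, and its projection at some coordinate is a `1`-perfect code in `H(n-1,q)`. -/
def IsExtOnePerfectH (n q : ℕ) (C : Set (Fin n → ZMod q)) : Prop :=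
  C.Nonempty ∧ codeDist (hammingGraph n q) C = 4 ∧
    ∃ i : Fin n, IsOnePerfect (hammingGraph (n - 1) q) (hammingProj i C)

/-- A perfect coloring of `G` in `k` colors with quotient matrix `S`: a surjective map
`f` onto the colors such that every vertex of color `i` has exactly `S i j` neighbours
of color `j`. -/
def IsPerfectColoring {V : Type*} (G : SimpleGraph V) {k : ℕ} (f : V → Fin k)
    (S : Matrix (Fin k) (Fin k) ℤ) : Prop :=
  Function.Surjective f ∧
    ∀ v j, (({u | G.Adj v u ∧ f u = j} : Set V).ncard : ℤ) = S (f v) j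

/-- A code `C` in `G` is completely regular with quotient matrix `S` if the distance
coloring `x ↦ d(x, C)` is a perfect coloring with quotient matrix `S`. -/
def IsCompletelyRegular {V : Type*} (G : SimpleGraph V) (C : Set V) {k : ℕ}
    (S : Matrix (Fin k) (Fin k) ℤ) : Prop :=
  ∃ h : ∀ x, distToCode G C x < k,
    IsPerfectColoring G (fun x => (⟨distToCode G C x, h x⟩ : Fin k)) S

/-- The connecting set of the Shrikhande graph as a Cayley graph on `ℤ₄ × ℤ₄`. -/
def shrikhandeSet : Set (ZMod 4 × ZMod 4) :=
  {(0, 1), (1, 0), (0, 3), (3, 0), (1, 1), (3, 3)}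

/-- The vertex set of the graph `D(m,n)`. -/
abbrev DoobV (m n : ℕ) := (Fin m → ZMod 4 × ZMod 4) × (Fin n → ZMod 4)

/-- The graph `D(m,n)`: the direct product of `m` copies of the Shrikhande graph and
`n` copies of `K₄`. Two vertices are adjacent iff they differ in exactly one
coordinate and, if it is a Shrikhande coordinate, the difference there lies in the
connecting set. For `m > 0` it is a Doob graph; `D(0,n) = H(n,4)`. -/
def doobGraph (m n : ℕ) : SimpleGraph (DoobV m n) :=
  SimpleGraph.fromRel (fun x y =>
    (∃ i, x.1 i - y.1 i ∈ shrikhandeSet ∧ (∀ j, j ≠ i → x.1 j = y.1 j) ∧ x.2 = y.2) ∨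
    (∃ i, x.2 i ≠ y.2 i ∧ (∀ j, j ≠ i → x.2 j = y.2 j) ∧ x.1 = y.1))

/-- The projection (puncturing) of a code in `D(m,n)` at the `K₄` coordinate `i`. -/
def doobProj {m n : ℕ} (i : Fin n) (C : Set (DoobV m n)) : Set (DoobV m (n - 1)) :=
  (fun x => (x.1, deleteCoord i x.2)) '' C

/-- A code `C` in `D(m,n)`, `n ≥ 1`, is extended `1`-perfect if it is nonempty, its code
distance is `4`, and its projection at some `K₄` coordinate is a `1`-perfect code in
`D(m,n-1)`. A code `C` in `D(m,0)` is extended `1`-perfect if it is nonempty, its code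
distance is `4`, and `2m = (4^l+2)/3` and `|C| = 4^(2m-l-1)` for some `l ≥ 1`. -/
def IsExtOnePerfectD (m n : ℕ) (C : Set (DoobV m n)) : Prop :=
  C.Nonempty ∧ codeDist (doobGraph m n) C = 4 ∧
    (if n = 0 then
        ∃ l : ℕ, 0 < l ∧ 3 * (2 * m) = 4 ^ l + 2 ∧ C.ncard = 4 ^ (2 * m - l - 1)
      else ∃ i : Fin n, IsOnePerfect (doobGraph m (n - 1)) (doobProj i C))

/-!
Write `A` for the adjacency matrix of `H(n,q)`, `J` for an all-ones matrix and, for a set `T` of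
coordinates, `E_T` for the Kronecker product of `qI - J` over the coordinates in `T` and of `J`
over the others: `q⁻ⁿ E_T` is the orthogonal projection onto the functions that are constant in
the coordinates outside `T` and have mean zero in each coordinate of `T`. Then `E_T² = qⁿ E_T`,
`∑_T E_T = qⁿ I` and `A E_T = θ_T E_T` with `θ_T = (q-1)n - q|T|`, so `qⁿ Aᵗ = ∑_T θ_Tᵗ E_T`.

Let `P` be the characteristic matrix of the colouring, so that `A P = P S`. The integers
`m_T = (Pᵀ E_T P)ᵢᵢ` are nonnegative, and `∑_T θ_Tᵗ m_T = qⁿ (Pᵀ Aᵗ P)ᵢᵢ = qⁿ |f⁻¹(i)| (Sᵗ)ᵢᵢ`.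
The rows of `E_T P` are left eigenvectors of `S` for `θ_T`, so `m_T = 0` unless `θ_T` is an
eigenvalue of `S`. The largest eigenvalue `λ₀` of `S` is its row sum `θ_∅ = (q-1)n`, which only
receives `m_∅ = |f⁻¹(i)|²`. Grouping the other `m_T` by eigenvalue gives `qⁿ aⱼ`, and uniqueness
is the invertibility of the Vandermonde matrix of the distinct `λ₁, …, λ_l`.
-/

open Finset Matrix

lemma sum_sum_filter_eq_sum_of_injective {β γ δ M : Type*} [Fintype β] [Fintype γ]
    [DecidableEq δ] [AddCommMonoid M] {L : γ → δ} (hL : Function.Injective L) (θ : β → δ)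
    {m : β → M} (hm : ∀ b, m b ≠ 0 → θ b ∈ Set.range L) :
    ∑ j, ∑ b with θ b = L j, m b = ∑ b, m b := by
  classical
  simp_rw [sum_filter]
  rw [sum_comm]
  refine sum_congr rfl fun b _ => ?_
  by_cases hb : m b = 0
  · simp [hb]
  · obtain ⟨j₀, hj₀⟩ := hm b hb
    simp [← hj₀, hL.eq_iff]

lemma eq_of_forall_sum_pow_mul_eq {R : Type*} [CommRing R] [IsDomain R] {l : ℕ}
    {x a b : Fin l → R} (hx : Function.Injective x)
    (h : ∀ t < l, ∑ j, x j ^ t * a j = ∑ j, x j ^ t * b j) : a = b := by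
  refine sub_eq_zero.mp (eq_zero_of_forall_pow_sum_mul_pow_eq_zero hx fun t => ?_)
  simp only [Pi.sub_apply, sub_mul, sum_sub_distrib, mul_comm (a _), mul_comm (b _), h t t.isLt,
    sub_self]

lemma Matrix.pow_mul_eq_mul_pow {R V W : Type*} [CommSemiring R] [Fintype V] [DecidableEq V]
    [Fintype W] [DecidableEq W] {A : Matrix V V R} {P : Matrix V W R} {S : Matrix W W R}
    (hAP : A * P = P * S) (t : ℕ) : A ^ t * P = P * S ^ t := by
  induction t with
  | zero => simp
  | succ t ih =>
    rw [pow_succ', Matrix.mul_assoc, ih, ← Matrix.mul_assoc, hAP, Matrix.mul_assoc, pow_succ']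

lemma eq_zero_of_vecMul_eq_smul {K W : Type*} [Field K] [Fintype W] [DecidableEq W]
    {S : Matrix W W K} {θ : K} (hθ : ¬∃ v : W → K, v ≠ 0 ∧ S *ᵥ v = θ • v) {r : W → K}
    (hr : r ᵥ* S = θ • r) : r = 0 := by
  by_contra hr0
  have hdet : (S - θ • 1).det = 0 :=
    exists_vecMul_eq_zero_iff.mp ⟨r, hr0, by rw [vecMul_sub, vecMul_smul, vecMul_one, hr, sub_self]⟩
  obtain ⟨v, hv, hSv⟩ := exists_mulVec_eq_zero_iff.mpr hdet
  rw [sub_mulVec, smul_mulVec, one_mulVec, sub_eq_zero] at hSv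
  exact hθ ⟨v, hv, hSv⟩

lemma isGreatest_eigenvalue_of_nonneg_of_mulVec_one {m : Type*} [Fintype m] [DecidableEq m]
    [Nonempty m] {M : Matrix m m ℝ} {d : ℝ} (hM : ∀ i j, 0 ≤ M i j) (hrow : M *ᵥ 1 = d • 1) :
    IsGreatest {x | ∃ v : m → ℝ, v ≠ 0 ∧ M *ᵥ v = x • v} d := by
  refine ⟨⟨1, one_ne_zero, hrow⟩, fun x ⟨v, hv, hx⟩ => ?_⟩
  obtain ⟨i, hi⟩ := eigenvalue_mem_ball (Module.End.hasEigenvalue_of_hasEigenvector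
    ⟨Module.End.mem_eigenspace_iff.mpr (by simpa using hx), hv⟩)
  have hsum : ∑ j, M i j = d := by simpa [mulVec, dotProduct] using congrFun hrow i
  rw [Metric.mem_closedBall, Real.dist_eq] at hi
  simp only [Real.norm_eq_abs, abs_of_nonneg (hM i _)] at hi
  rw [← add_sum_erase univ _ (mem_univ i)] at hsum
  linarith [le_abs_self (x - M i i)]

lemma IsGreatest.eq_apply_zero_of_antitone {β : Type*} [LinearOrder β] {s : Set β} {d : β}
    (hd : IsGreatest s d) {l : ℕ} {L : Fin (l + 1) → β} (hL : Antitone L)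
    (hs : ∀ x, x ∈ s ↔ ∃ j, L j = x) : L 0 = d := by
  obtain ⟨j, rfl⟩ := (hs d).1 hd.1
  exact le_antisymm (hd.2 ((hs _).2 ⟨0, rfl⟩)) (hL (Fin.zero_le j))

section KroneckerPi
variable {ι α R : Type*} [Fintype ι] [CommSemiring R]

def kroneckerPi (M : ι → Matrix α α R) : Matrix (ι → α) (ι → α) R :=
  of fun x y => ∏ i, M i (x i) (y i)

lemma kroneckerPi_transpose (M : ι → Matrix α α R) :
    (kroneckerPi M)ᵀ = kroneckerPi fun i => (M i)ᵀ := rfl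

lemma kroneckerPi_mul [DecidableEq ι] [Fintype α] (M N : ι → Matrix α α R) :
    kroneckerPi M * kroneckerPi N = kroneckerPi fun i => M i * N i := by
  ext x y
  simp only [kroneckerPi, mul_apply, of_apply, ← prod_mul_distrib]
  exact (Fintype.prod_sum fun i c => M i (x i) c * N i c (y i)).symm

lemma kroneckerPi_smul (c : R) (M : ι → Matrix α α R) :
    kroneckerPi (fun i => c • M i) = c ^ Fintype.card ι • kroneckerPi M := by
  ext x y
  simp [kroneckerPi, prod_mul_distrib]

lemma kroneckerPi_one [DecidableEq α] : kroneckerPi (fun _ : ι => (1 : Matrix α α R)) = 1 := by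
  ext x y
  simp [kroneckerPi, one_apply, prod_boole, funext_iff]

lemma sum_kroneckerPi_ite [DecidableEq ι] (M N : ι → Matrix α α R) :
    ∑ T : Finset ι, kroneckerPi (fun i => if i ∈ T then M i else N i) =
      kroneckerPi fun i => M i + N i := by
  ext x y
  simp only [kroneckerPi, Matrix.sum_apply, of_apply, Matrix.add_apply, Fintype.prod_add,
    Matrix.ite_apply, prod_ite, filter_mem_eq_inter, univ_inter, filter_not, compl_eq_univ_sdiff]

lemma kroneckerPi_update_smul [DecidableEq ι] (M : ι → Matrix α α R) (i : ι) (c : R) :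
    kroneckerPi (Function.update M i (c • M i)) = c • kroneckerPi M := by
  ext x y
  simp only [kroneckerPi, of_apply, Matrix.smul_apply, smul_eq_mul, Function.update_apply,
    Matrix.ite_apply, prod_ite, filter_eq', mem_univ, if_true, prod_singleton]
  rw [← mul_prod_erase univ _ (mem_univ i), mul_assoc, ← filter_ne']

end KroneckerPi

def allOnes (β : Type*) : Matrix β β ℤ := of fun _ _ => 1

lemma allOnes_transpose {β : Type*} : (allOnes β)ᵀ = allOnes β := rfl

section AllOnes
variable {α : Type*} [Fintype α]

local notation "q" => (Fintype.card α : ℤ)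

lemma allOnes_mul_allOnes : allOnes α * allOnes α = q • allOnes α := by
  ext; simp [allOnes, mul_apply]

variable [DecidableEq α]

lemma allOnes_mul_sub_allOnes : allOnes α * (q • 1 - allOnes α) = 0 := by
  rw [mul_sub, mul_smul_comm, mul_one, allOnes_mul_allOnes, sub_self]

lemma sub_allOnes_mul_self :
    (q • 1 - allOnes α) * (q • 1 - allOnes α) = q • (q • 1 - allOnes α) := by
  rw [sub_mul, allOnes_mul_sub_allOnes, smul_mul_assoc, one_mul, sub_zero]

end AllOnes

section HammingAdjacency
variable {ι α : Type*} [Fintype ι] [DecidableEq α]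

variable (ι α) in
def hammingAdjMatrix : Matrix (ι → α) (ι → α) ℤ :=
  of fun x y => if hammingDist x y = 1 then 1 else 0

lemma hammingAdjMatrix_transpose : (hammingAdjMatrix ι α)ᵀ = hammingAdjMatrix ι α := by
  ext x y
  simp [hammingAdjMatrix, hammingDist_comm]

lemma hammingAdjMatrix_eq_sum [DecidableEq ι] :
    hammingAdjMatrix ι α =
      ∑ i, kroneckerPi (Function.update (fun _ => 1) i (allOnes α - 1)) := by
  ext x y
  set D : Finset ι := {j | x j ≠ y j}
  have hterm (c : ι) : kroneckerPi (Function.update (fun _ => 1) c (allOnes α - 1)) x y =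
      if D = {c} then 1 else 0 := by
    rw [kroneckerPi, of_apply, ← mul_prod_erase univ _ (mem_univ c)]
    simp only [Function.update_self]
    rw [prod_congr rfl fun j hj => by rw [Function.update_of_ne (ne_of_mem_erase hj)]]
    simp [allOnes, one_apply, prod_boole, eq_singleton_iff_unique_mem, D]
    split_ifs <;> grind
  rw [Matrix.sum_apply, sum_congr rfl fun c _ => hterm c, hammingAdjMatrix, of_apply]
  change (if #D = 1 then 1 else 0) = _
  rcases em (∃ a, D = {a}) with ⟨a, ha⟩ | h
  · simp [ha, singleton_inj]
  · push Not at h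
    simp [h, card_eq_one]

lemma adjMatrix_hammingGraph (n q : ℕ) [NeZero q] [DecidableRel (hammingGraph n q).Adj] :
    (hammingGraph n q).adjMatrix ℤ = hammingAdjMatrix (Fin n) (ZMod q) := by
  ext x y
  exact if_congr Iff.rfl rfl rfl

end HammingAdjacency

section HammingScheme
variable {ι α : Type*} [DecidableEq ι] [Fintype α] [DecidableEq α]

local notation "q" => (Fintype.card α : ℤ)

variable (α) in
def hammingFactor (T : Finset ι) (i : ι) : Matrix α α ℤ :=
  if i ∈ T then q • 1 - allOnes α else allOnes α

lemma hammingFactor_transpose (T : Finset ι) (i : ι) :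
    (hammingFactor α T i)ᵀ = hammingFactor α T i := by
  unfold hammingFactor
  split_ifs <;> simp [allOnes_transpose]

lemma hammingFactor_mul_self (T : Finset ι) (i : ι) :
    hammingFactor α T i * hammingFactor α T i = q • hammingFactor α T i := by
  unfold hammingFactor
  split_ifs
  · exact sub_allOnes_mul_self
  · exact allOnes_mul_allOnes

lemma allOnes_sub_one_mul_hammingFactor (T : Finset ι) (i : ι) :
    (allOnes α - 1) * hammingFactor α T i =
      (q - 1 - if i ∈ T then q else 0) • hammingFactor α T i := by
  unfold hammingFactor
  split_ifs
  · rw [sub_mul, allOnes_mul_sub_allOnes, one_mul]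
    module
  · rw [sub_mul, allOnes_mul_allOnes, one_mul]
    module

variable [Fintype ι]

variable (α) in
def hammingIdempotent (T : Finset ι) : Matrix (ι → α) (ι → α) ℤ :=
  kroneckerPi (hammingFactor α T)

variable (α) in
def hammingEigenvalue (T : Finset ι) : ℤ :=
  (q - 1) * Fintype.card ι - q * #T

lemma hammingIdempotent_transpose (T : Finset ι) :
    (hammingIdempotent α T)ᵀ = hammingIdempotent α T := by
  simp only [hammingIdempotent, kroneckerPi_transpose, hammingFactor_transpose]

lemma hammingIdempotent_mul_self (T : Finset ι) :
    hammingIdempotent α T * hammingIdempotent α T =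
      q ^ Fintype.card ι • hammingIdempotent α T := by
  simp only [hammingIdempotent, kroneckerPi_mul, hammingFactor_mul_self, kroneckerPi_smul]

lemma sum_hammingIdempotent :
    ∑ T : Finset ι, hammingIdempotent α T = q ^ Fintype.card ι • 1 := by
  unfold hammingIdempotent hammingFactor
  simp only [sum_kroneckerPi_ite, sub_add_cancel, kroneckerPi_smul, kroneckerPi_one]

lemma hammingIdempotent_empty : hammingIdempotent α (∅ : Finset ι) = allOnes (ι → α) := by
  ext; simp [hammingIdempotent, hammingFactor, kroneckerPi, allOnes]

lemma hammingAdjMatrix_mul_hammingIdempotent (T : Finset ι) :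
    hammingAdjMatrix ι α * hammingIdempotent α T =
      hammingEigenvalue α T • hammingIdempotent α T := by
  have hfactor (i : ι) : (fun j => Function.update (fun _ => 1) i (allOnes α - 1) j *
      hammingFactor α T j) = Function.update (hammingFactor α T) i
        ((q - 1 - if i ∈ T then q else 0) • hammingFactor α T i) := by
    rw [← allOnes_sub_one_mul_hammingFactor]
    ext1 j
    rcases eq_or_ne j i with rfl | hji
    · simp
    · simp [hji]
  simp only [hammingAdjMatrix_eq_sum, sum_mul, hammingIdempotent, kroneckerPi_mul, hfactor,
    kroneckerPi_update_smul, ← sum_smul]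
  congr 1
  simp [hammingEigenvalue, sum_sub_distrib, sum_ite_mem]
  ring

lemma hammingIdempotent_mul_hammingAdjMatrix (T : Finset ι) :
    hammingIdempotent α T * hammingAdjMatrix ι α =
      hammingEigenvalue α T • hammingIdempotent α T := by
  rw [← hammingIdempotent_transpose, ← hammingAdjMatrix_transpose, ← transpose_mul,
    hammingAdjMatrix_mul_hammingIdempotent, transpose_smul, hammingIdempotent_transpose]

lemma hammingAdjMatrix_mulVec_one :
    hammingAdjMatrix ι α *ᵥ 1 = hammingEigenvalue α (∅ : Finset ι) • 1 := by
  ext x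
  simpa [hammingIdempotent_empty, allOnes, mul_apply, mulVec, dotProduct] using
    congrFun₂ (hammingAdjMatrix_mul_hammingIdempotent (α := α) (∅ : Finset ι)) x x

lemma smul_hammingAdjMatrix_pow (t : ℕ) :
    q ^ Fintype.card ι • hammingAdjMatrix ι α ^ t =
      ∑ T : Finset ι, hammingEigenvalue α T ^ t • hammingIdempotent α T := by
  have hpow (T : Finset ι) : hammingAdjMatrix ι α ^ t * hammingIdempotent α T =
      hammingEigenvalue α T ^ t • hammingIdempotent α T := by
    induction t with
    | zero => simp
    | succ t ih =>
      rw [pow_succ, mul_assoc, hammingAdjMatrix_mul_hammingIdempotent, mul_smul_comm, ih,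
        smul_smul, pow_succ']
  rw [← sum_congr rfl fun T _ => hpow T, ← mul_sum, sum_hammingIdempotent, mul_smul_comm, mul_one]

lemma transpose_mul_hammingIdempotent_mul_apply_nonneg [Nonempty α] {W : Type*}
    (P : Matrix (ι → α) W ℤ) (T : Finset ι) (i : W) :
    0 ≤ (Pᵀ * hammingIdempotent α T * P) i i := by
  have hsq : q ^ Fintype.card ι • (Pᵀ * hammingIdempotent α T * P) =
      (hammingIdempotent α T * P)ᵀ * (hammingIdempotent α T * P) := by
    rw [transpose_mul, hammingIdempotent_transpose]
    simp only [Matrix.mul_assoc]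
    rw [← Matrix.mul_assoc (hammingIdempotent α T), hammingIdempotent_mul_self, Matrix.smul_mul,
      Matrix.mul_smul]
  have hq : (0 : ℤ) < q ^ Fintype.card ι := by positivity
  refine (mul_nonneg_iff_of_pos_left hq).mp ?_
  rw [← smul_eq_mul, ← Matrix.smul_apply, hsq, mul_apply]
  exact sum_nonneg fun x _ => mul_self_nonneg _

end HammingScheme

section ColorMatrix
variable {V W : Type*} [DecidableEq W]

def colorMatrix (f : V → W) : Matrix V W ℤ := of fun v j => if f v = j then 1 else 0

variable {f : V → W}

lemma colorMatrix_mul_apply [Fintype W] (M : Matrix W W ℤ) (v : V) (j : W) :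
    (colorMatrix f * M) v j = M (f v) j := by
  simp [colorMatrix, mul_apply]

lemma colorMatrix_mulVec [Fintype W] (w : W → ℤ) : colorMatrix f *ᵥ w = w ∘ f := by
  ext v
  simp [colorMatrix, mulVec, dotProduct]

lemma mulVec_one_of_mul_colorMatrix [Fintype W] {A : Matrix V V ℤ} {S : Matrix W W ℤ} [Fintype V]
    (hAP : A * colorMatrix f = colorMatrix f * S) (hf : Function.Surjective f) {d : ℤ}
    (hA : A *ᵥ 1 = d • 1) : S *ᵥ 1 = d • 1 := by
  have h := congrArg (· *ᵥ (1 : W → ℤ)) hAP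
  simp only [← mulVec_mulVec, colorMatrix_mulVec] at h
  ext j
  obtain ⟨v, rfl⟩ := hf j
  simpa [hA] using (congrFun h v).symm

variable [Fintype V]

lemma transpose_colorMatrix_mul_self :
    (colorMatrix f)ᵀ * colorMatrix f = diagonal fun j => (#{v | f v = j} : ℤ) := by
  ext i j
  simp only [colorMatrix, mul_apply, transpose_apply, of_apply, diagonal_apply, mul_ite, mul_one,
    mul_zero]
  split_ifs with h <;> simp [← ite_and, h, sum_boole]
  exact fun v hj hi => h (hi.symm.trans hj)

lemma transpose_colorMatrix_mul_allOnes_mul_apply (j : W) :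
    ((colorMatrix f)ᵀ * allOnes V * colorMatrix f) j j = (#{v | f v = j} : ℤ) ^ 2 := by
  simp [colorMatrix, allOnes, mul_apply, sum_boole, sq, ← sum_filter]

end ColorMatrix

namespace IsPerfectColoring
variable {V : Type*} {G : SimpleGraph V} {k : ℕ} {f : V → Fin k} {S : Matrix (Fin k) (Fin k) ℤ}

lemma adjMatrix_mul_colorMatrix [Fintype V] [DecidableEq V] [DecidableRel G.Adj]
    (hf : IsPerfectColoring G f S) : G.adjMatrix ℤ * colorMatrix f = colorMatrix f * S := by
  ext v j
  rw [colorMatrix_mul_apply, ← hf.2 v j, Set.ncard_eq_toFinset_card']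
  simp [colorMatrix, mul_apply, ← ite_and, sum_boole, and_comm]

lemma nonneg (hf : IsPerfectColoring G f S) (i j : Fin k) : 0 ≤ S i j := by
  obtain ⟨v, rfl⟩ := hf.1 i
  rw [← hf.2 v j]
  positivity

lemma isGreatest_eigenvalue_hammingGraph {n q : ℕ} [NeZero q] {f : (Fin n → ZMod q) → Fin k}
    (hf : IsPerfectColoring (hammingGraph n q) f S) :
    IsGreatest {x : ℝ | ∃ v : Fin k → ℝ, v ≠ 0 ∧ S.map (↑) *ᵥ v = x • v}
      (hammingEigenvalue (ZMod q) (∅ : Finset (Fin n))) := by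
  classical
  have : Nonempty (Fin k) := ⟨f 0⟩
  have hS : S *ᵥ 1 = hammingEigenvalue (ZMod q) (∅ : Finset (Fin n)) • 1 :=
    mulVec_one_of_mul_colorMatrix (adjMatrix_hammingGraph n q ▸ hf.adjMatrix_mul_colorMatrix) hf.1
      hammingAdjMatrix_mulVec_one
  refine isGreatest_eigenvalue_of_nonneg_of_mulVec_one (fun a b => by simpa using hf.nonneg a b) ?_
  ext j
  simpa [mulVec, dotProduct] using congrArg (Int.cast : ℤ → ℝ) (congrFun hS j)

end IsPerfectColoring

section SpectralWeight
variable {ι α W : Type*} [Fintype ι] [DecidableEq ι] [Fintype α] [DecidableEq α]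

local notation "q" => (Fintype.card α : ℤ)

noncomputable def spectralWeight (P : Matrix (ι → α) W ℤ) (i : W) (μ : ℝ) : ℤ :=
  ∑ T : Finset ι with (hammingEigenvalue α T : ℝ) = μ, (Pᵀ * hammingIdempotent α T * P) i i

lemma spectralWeight_nonneg [Nonempty α] (P : Matrix (ι → α) W ℤ) (i : W) (μ : ℝ) :
    0 ≤ spectralWeight P i μ :=
  sum_nonneg fun T _ => transpose_mul_hammingIdempotent_mul_apply_nonneg P T i

lemma spectralWeight_hammingEigenvalue_empty [Nonempty α] (P : Matrix (ι → α) W ℤ) (i : W) :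
    spectralWeight P i (hammingEigenvalue α (∅ : Finset ι)) =
      (Pᵀ * allOnes (ι → α) * P) i i := by
  have hfiber : ({T | (hammingEigenvalue α T : ℝ) = hammingEigenvalue α (∅ : Finset ι)} :
      Finset (Finset ι)) = {∅} := by
    ext T
    simp [hammingEigenvalue]
  rw [spectralWeight, hfiber, sum_singleton, hammingIdempotent_empty]

variable [Fintype W] [DecidableEq W] {P : Matrix (ι → α) W ℤ} {S : Matrix W W ℤ}

lemma hammingIdempotent_mul_eq_zero (hAP : hammingAdjMatrix ι α * P = P * S) {T : Finset ι}
    (hT : ¬∃ v : W → ℝ, v ≠ 0 ∧ S.map (↑) *ᵥ v = (hammingEigenvalue α T : ℝ) • v) :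
    hammingIdempotent α T * P = 0 := by
  have hQ : hammingIdempotent α T * P * S =
      hammingEigenvalue α T • (hammingIdempotent α T * P) := by
    rw [Matrix.mul_assoc, ← hAP, ← Matrix.mul_assoc, hammingIdempotent_mul_hammingAdjMatrix,
      smul_mul]
  ext x j
  have hrow := eq_zero_of_vecMul_eq_smul hT
    (r := fun j => ((hammingIdempotent α T * P) x j : ℝ)) <| by
      ext j
      simpa [vecMul, dotProduct, mul_apply] using congrArg (Int.cast : ℤ → ℝ) (congrFun₂ hQ x j)
  simpa using congrFun hrow j

lemma sum_hammingEigenvalue_pow_smul (hAP : hammingAdjMatrix ι α * P = P * S) (t : ℕ) :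
    ∑ T : Finset ι, hammingEigenvalue α T ^ t • (Pᵀ * hammingIdempotent α T * P) =
      q ^ Fintype.card ι • (Pᵀ * P * S ^ t) := by
  calc ∑ T : Finset ι, hammingEigenvalue α T ^ t • (Pᵀ * hammingIdempotent α T * P)
      = Pᵀ * (∑ T : Finset ι, hammingEigenvalue α T ^ t • hammingIdempotent α T) * P := by
        simp only [Matrix.mul_sum, Matrix.sum_mul, Matrix.mul_smul, Matrix.smul_mul]
    _ = q ^ Fintype.card ι • (Pᵀ * P * S ^ t) := by
        rw [← smul_hammingAdjMatrix_pow, Matrix.mul_smul, Matrix.smul_mul, Matrix.mul_assoc,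
          Matrix.pow_mul_eq_mul_pow hAP, Matrix.mul_assoc]

lemma sum_pow_mul_spectralWeight (hAP : hammingAdjMatrix ι α * P = P * S) {m : ℕ}
    {L : Fin m → ℝ} (hL : Function.Injective L)
    (hspec : ∀ x : ℝ, (∃ v : W → ℝ, v ≠ 0 ∧ S.map (↑) *ᵥ v = x • v) → ∃ j, L j = x)
    (i : W) (t : ℕ) :
    ∑ j, L j ^ t * (spectralWeight P i (L j) : ℝ) =
      q ^ Fintype.card ι * (Pᵀ * P * S ^ t) i i := by
  have hvanish (T : Finset ι) (hT : (hammingEigenvalue α T : ℝ) ^ t *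
      ((Pᵀ * hammingIdempotent α T * P) i i : ℝ) ≠ 0) :
      (hammingEigenvalue α T : ℝ) ∈ Set.range L := by
    by_contra hnot
    rw [Matrix.mul_assoc, hammingIdempotent_mul_eq_zero hAP fun hex => hnot (hspec _ hex)] at hT
    simp at hT
  have hmoment := congrArg (fun M => ((M i i : ℤ) : ℝ)) (sum_hammingEigenvalue_pow_smul hAP t)
  simp only [Matrix.sum_apply, Matrix.smul_apply, smul_eq_mul, Int.cast_sum, Int.cast_mul,
    Int.cast_pow] at hmoment
  rw [← hmoment, ← sum_sum_filter_eq_sum_of_injective hL _ hvanish]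
  refine sum_congr rfl fun j _ => ?_
  rw [spectralWeight, Int.cast_sum, mul_sum]
  exact sum_congr rfl fun T hT => by rw [(mem_filter.mp hT).2]

end SpectralWeight

/-- Theorem 1 for `H(n,3)` (Statement 3): for a perfect coloring `f` of `H(n,3)` with
quotient matrix `S` whose distinct eigenvalues are `L 0 > L 1 > … > L l`, and any color
`i`, the Vandermonde system has a unique solution `(a 0, …, a (l-1))` (indexed so that
`a j` corresponds to the eigenvalue `L (j+1)`), and `3^n * a j` is a non-negative
integer for every `j`. -/
theorem statement3 (n : ℕ) {k l : ℕ} (f : (Fin n → ZMod 3) → Fin k)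
    (S : Matrix (Fin k) (Fin k) ℤ)
    (hf : IsPerfectColoring (hammingGraph n 3) f S)
    (L : Fin (l + 1) → ℝ) (hmono : StrictAnti L)
    (heig : ∀ x : ℝ,
      (∃ v : Fin k → ℝ, v ≠ 0 ∧ (S.map ((↑) : ℤ → ℝ)).mulVec v = x • v) ↔ ∃ j, L j = x)
    (i : Fin k) :
    ∃ a : Fin l → ℝ,
      (∀ t : ℕ, t < l →
        ∑ j : Fin l, (L j.succ) ^ t * a j
          = ((f ⁻¹' {i}).ncard : ℝ) * (((S ^ t) i i : ℤ) : ℝ)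
            - (((f ⁻¹' {i}).ncard : ℝ) ^ 2 / 3 ^ n) * (L 0) ^ t) ∧
      (∀ b : Fin l → ℝ,
        (∀ t : ℕ, t < l →
          ∑ j : Fin l, (L j.succ) ^ t * b j
            = ((f ⁻¹' {i}).ncard : ℝ) * (((S ^ t) i i : ℤ) : ℝ)
              - (((f ⁻¹' {i}).ncard : ℝ) ^ 2 / 3 ^ n) * (L 0) ^ t) → b = a) ∧
      (∀ j : Fin l, ∃ r : ℕ, (3 ^ n : ℝ) * a j = r) := by
  classical
  have hAP := adjMatrix_hammingGraph n 3 ▸ hf.adjMatrix_mul_colorMatrix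
  have hθ₀ : (hammingEigenvalue (ZMod 3) (∅ : Finset (Fin n)) : ℝ) = 2 * n := by
    simp [hammingEigenvalue]
  have hL₀ : L 0 = 2 * n :=
    hθ₀ ▸ hf.isGreatest_eigenvalue_hammingGraph.eq_apply_zero_of_antitone hmono.antitone heig
  have hc : ((f ⁻¹' {i}).ncard : ℝ) = #{v | f v = i} := by
    simp [Set.ncard_eq_toFinset_card']
  have hw₀ : (spectralWeight (colorMatrix f) i (L 0) : ℝ) = (#{v | f v = i} : ℝ) ^ 2 := by
    rw [hL₀, ← hθ₀, spectralWeight_hammingEigenvalue_empty,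
      transpose_colorMatrix_mul_allOnes_mul_apply]
    norm_cast
  have hsol (t : ℕ) :
      ∑ j : Fin l, L j.succ ^ t * ((spectralWeight (colorMatrix f) i (L j.succ) : ℝ) / 3 ^ n) =
        #{v | f v = i} * ((S ^ t) i i : ℝ) - ((#{v | f v = i} : ℝ) ^ 2 / 3 ^ n) * L 0 ^ t := by
    have h := sum_pow_mul_spectralWeight hAP hmono.injective (fun x hx => (heig x).1 hx) i t
    rw [transpose_colorMatrix_mul_self, diagonal_mul, Fin.sum_univ_succ, hw₀] at h
    simp only [← mul_div_assoc, ← sum_div]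
    rw [eq_sub_of_add_eq' h]
    simp only [ZMod.card, Nat.cast_ofNat, Int.cast_ofNat, Fintype.card_fin, Int.cast_mul,
      Int.cast_natCast]
    field_simp
  refine ⟨fun j => spectralWeight (colorMatrix f) i (L j.succ) / 3 ^ n, fun t _ => hc ▸ hsol t,
    fun b hb => ?_, fun j => ⟨(spectralWeight (colorMatrix f) i (L j.succ)).toNat, ?_⟩⟩
  · exact eq_of_forall_sum_pow_mul_eq (hmono.injective.comp (Fin.succ_injective _))
      fun t ht => (hb t ht).trans (hc ▸ hsol t).symm
  · rw [mul_div_cancel₀ _ (by positivity)]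
    exact_mod_cast (Int.toNat_of_nonneg (spectralWeight_nonneg _ i _)).symm
end

section
/- For every q ≥ 2 and every odd n ≥ 3, there are no extended 1-perfect codes in the Hamming graph H(n,q). -/
/-!
Puncture the code `C` at the coordinate `i` where its projection is 1-perfect, fix a codeword
`c₀`, a punctured coordinate `j` and a value `a ≠ c₀ j`. For every other punctured coordinate
`k` and value `b ≠ c₀ k`, the word obtained from `c₀` by setting `j ↦ a`, `k ↦ b` is covered by a
codeword whose projection is at distance 3 from that of `c₀` and agrees with the word at `j` and
`k`. Since the code distance is 4, these `q - 1` codewords have pairwise distinct `i`-th entries,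
all different from `c₀ i`; so for each `σ ≠ c₀ i` exactly one of them has `i`-th entry `σ`. Thus
the codewords with `i`-th entry `σ`, `j`-th entry `a` and punctured distance 3 from `c₀` split
the `n - 2` coordinates other than `i` and `j` into pairs, and `n` is even.
-/
section Hamming

variable {ι : Type*} [Fintype ι] {β : ι → Type*} [∀ t, DecidableEq (β t)]

theorem hammingDist_update_le_one [DecidableEq ι] (x : ∀ t, β t) (j : ι) (a : β j) :
    hammingDist (Function.update x j a) x ≤ 1 := by
  refine (Finset.card_le_card fun t ht => ?_).trans (Finset.card_singleton j).le
  by_contra htj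
  simp_all [Function.update_of_ne (Finset.notMem_singleton.mp htj)]

theorem apply_eq_of_hammingDist_eq_add {x y z : ∀ t, β t}
    (h : hammingDist x z = hammingDist x y + hammingDist y z) {t : ι} (ht : y t ≠ z t) :
    x t = y t := by
  have hle : ∀ s ∈ Finset.univ, (if x s ≠ z s then 1 else 0) ≤
      (if x s ≠ y s then 1 else 0) + (if y s ≠ z s then 1 else 0) := by
    intro s _
    by_cases hxy : x s = y s
    · rw [hxy]; simp
    · simp only [hxy, ne_eq, not_false_eq_true, if_true]
      split_ifs <;> omega
  simp only [hammingDist, Finset.card_filter, ← Finset.sum_add_distrib] at h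
  have := (Finset.sum_eq_sum_iff_of_le hle).mp h t (Finset.mem_univ t)
  by_contra hxy
  simp only [hxy, ht, ne_eq, not_false_eq_true, if_true] at this
  split_ifs at this
  omega

theorem hammingDist_add_three_le {x y z : ∀ t, β t} {j k : ι} (hkj : k ≠ j) (hj : x j = y j)
    (hxj : x j ≠ z j) (hxk : x k ≠ z k) (hyk : y k ≠ z k) :
    hammingDist x y + 3 ≤ hammingDist x z + hammingDist y z := by
  classical
  set Sx : Finset ι := {t | x t ≠ z t}
  set Sy : Finset ι := {t | y t ≠ z t}
  have hsub : ({t | x t ≠ y t} : Finset ι) ⊆ (Sx ∪ Sy).erase j := by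
    intro t ht
    simp only [Finset.mem_filter, Finset.mem_univ, true_and] at ht
    refine Finset.mem_erase.mpr ⟨fun htj => ht (htj ▸ hj), ?_⟩
    by_cases hxz : x t = z t
    · exact Finset.mem_union_right _ (by simpa [Sy, ← hxz] using Ne.symm ht)
    · exact Finset.mem_union_left _ (by simpa [Sx] using hxz)
  have hpair : ({j, k} : Finset ι) ⊆ Sx ∩ Sy := by
    intro t ht
    rcases Finset.mem_insert.mp ht with rfl | ht <;> simp_all [Sx, Sy]
  have hj_mem : j ∈ Sx ∪ Sy := by simp_all [Sx]
  have h1 := Finset.card_le_card hsub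
  have h2 := Finset.card_le_card hpair
  rw [Finset.card_erase_of_mem hj_mem] at h1
  rw [Finset.card_pair hkj.symm] at h2
  have := Finset.card_union_add_card_inter Sx Sy
  show Finset.card _ + 3 ≤ Sx.card + Sy.card
  have := Finset.card_pos.mpr ⟨j, hj_mem⟩
  omega

end Hamming

theorem hammingDist_eq_ite_add_removeNth {α : Type*} [DecidableEq α] {m : ℕ} (i : Fin (m + 1))
    (x y : Fin (m + 1) → α) :
    hammingDist x y =
      (if x i ≠ y i then 1 else 0) + hammingDist (i.removeNth x) (i.removeNth y) := by
  rw [hammingDist, hammingDist, Finset.card_filter, Finset.card_filter, Fin.sum_univ_succAbove _ i]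
  rfl

section HammingGraph

variable {n q : ℕ}

theorem hammingDist_le_length {x y : Fin n → ZMod q} (p : (hammingGraph n q).Walk x y) :
    hammingDist x y ≤ p.length := by
  induction p with
  | nil => simp
  | @cons u v w huv _ ih =>
    have : hammingDist u v = 1 := huv
    have := hammingDist_triangle u v w
    rw [SimpleGraph.Walk.length_cons]
    omega

theorem exists_walk_length_le_hammingDist (x y : Fin n → ZMod q) :
    ∃ p : (hammingGraph n q).Walk x y, p.length ≤ hammingDist x y := by
  induction h : hammingDist x y using Nat.strong_induction_on generalizing x with
  | _ d ih =>
  by_cases hxy : x = y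
  · subst hxy
    exact ⟨.nil, by simp⟩
  obtain ⟨k, hk⟩ := Function.ne_iff.mp hxy
  set x' := Function.update x k (y k)
  have hadj : (hammingGraph n q).Adj x x' := by
    refine le_antisymm (hammingDist_comm x x' ▸ hammingDist_update_le_one x k (y k)) ?_
    exact hammingDist_pos.mpr fun hxx' => hk (by rw [hxx']; simp [x'])
  have hlt : hammingDist x' y < hammingDist x y := by
    refine Finset.card_lt_card <| (Finset.ssubset_iff_of_subset fun t ht => ?_).mpr
      ⟨k, by simpa using hk, by simp [x']⟩
    by_cases htk : t = k
    · simp_all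
    · simpa [x', Function.update_of_ne htk] using ht
  obtain ⟨p, hp⟩ := ih _ (h ▸ hlt) x' rfl
  exact ⟨.cons hadj p, by rw [SimpleGraph.Walk.length_cons]; omega⟩

theorem hammingGraph_dist (x y : Fin n → ZMod q) :
    (hammingGraph n q).dist x y = hammingDist x y := by
  obtain ⟨p, hp⟩ := exists_walk_length_le_hammingDist x y
  obtain ⟨w, hw⟩ := p.reachable.exists_walk_length_eq_dist
  exact le_antisymm ((SimpleGraph.dist_le p).trans hp) (hw ▸ hammingDist_le_length w)

end HammingGraph

theorem codeDist_le_dist {V : Type*} {G : SimpleGraph V} {C : Set V} {c c' : V} (hc : c ∈ C)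
    (hc' : c' ∈ C) (hne : c ≠ c') : codeDist G C ≤ G.dist c c' :=
  Nat.sInf_le ⟨c, hc, c', hc', hne, rfl⟩

theorem IsOnePerfect.exists_hammingDist_le_one {m q : ℕ} {P : Set (Fin m → ZMod q)}
    (hP : IsOnePerfect (hammingGraph m q) P) (y : Fin m → ZMod q) :
    ∃ p ∈ P, hammingDist y p ≤ 1 := by
  obtain ⟨p, ⟨hp, hy⟩, -⟩ := hP y
  exact ⟨p, hp, hammingGraph_dist y p ▸ hy⟩

section Puncturing

variable {α : Type*} [DecidableEq α] {m : ℕ} {i : Fin (m + 1)} {C : Set (Fin (m + 1) → α)}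
  {c c' : Fin (m + 1) → α}

theorem eq_of_apply_eq_of_hammingDist_removeNth_le (hC : C.Pairwise (4 ≤ hammingDist · ·))
    (hc : c ∈ C) (hc' : c' ∈ C) (hi : c i = c' i)
    (h : hammingDist (i.removeNth c) (i.removeNth c') ≤ 3) : c = c' := by
  by_contra hne
  have : 4 ≤ hammingDist c c' := hC hc hc' hne
  rw [hammingDist_eq_ite_add_removeNth i, if_neg (not_not.mpr hi)] at this
  omega

theorem three_le_hammingDist_removeNth (hC : C.Pairwise (4 ≤ hammingDist · ·))
    (hc : c ∈ C) (hc' : c' ∈ C) (hne : c ≠ c') :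
    3 ≤ hammingDist (i.removeNth c) (i.removeNth c') := by
  have : 4 ≤ hammingDist c c' := hC hc hc' hne
  rw [hammingDist_eq_ite_add_removeNth i] at this
  split_ifs at this <;> omega

theorem apply_ne_of_hammingDist_removeNth_eq_three (hC : C.Pairwise (4 ≤ hammingDist · ·))
    (hc : c ∈ C) (hc' : c' ∈ C) (h : hammingDist (i.removeNth c) (i.removeNth c') = 3) :
    c i ≠ c' i := by
  intro hi
  rw [eq_of_apply_eq_of_hammingDist_removeNth_le hC hc hc' hi h.le, hammingDist_self] at h
  omega

end Puncturing

section Blocks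

variable {α : Type*} [DecidableEq α] {m : ℕ} {i : Fin (m + 1)} {C : Set (Fin (m + 1) → α)}
  {c c' c₀ : Fin (m + 1) → α} {j k : Fin m}

theorem exists_mem_removeNth_eq_of_covering (hC : C.Pairwise (4 ≤ hammingDist · ·))
    (hcov : ∀ y, ∃ c ∈ C, hammingDist y (i.removeNth c) ≤ 1) (hc₀ : c₀ ∈ C) (hkj : k ≠ j)
    {a b : α} (ha : a ≠ i.removeNth c₀ j) (hb : b ≠ i.removeNth c₀ k) :
    ∃ c ∈ C, hammingDist (i.removeNth c) (i.removeNth c₀) = 3 ∧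
      i.removeNth c j = a ∧ i.removeNth c k = b := by
  set d₀ := i.removeNth c₀
  set y := Function.update (Function.update d₀ j a) k b
  have hyj : y j = a := by simp [y, hkj.symm]
  have hyk : y k = b := by simp [y]
  have hy : hammingDist y d₀ = 2 := by
    refine le_antisymm ((hammingDist_triangle _ _ _).trans
      (add_le_add (hammingDist_update_le_one _ _ _) (hammingDist_update_le_one _ _ _))) ?_
    refine (Finset.card_pair hkj.symm).symm.le.trans (Finset.card_le_card fun t ht => ?_)
    rcases Finset.mem_insert.mp ht with rfl | ht
    · simpa [hyj] using ha
    · simpa [Finset.mem_singleton.mp ht, hyk] using hb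
  obtain ⟨c, hc, hcy⟩ := hcov y
  have hne : c ≠ c₀ := by
    rintro rfl
    have : hammingDist y d₀ ≤ 1 := hcy
    omega
  have h3 : 3 ≤ hammingDist (i.removeNth c) d₀ := three_le_hammingDist_removeNth hC hc hc₀ hne
  have htri := hammingDist_triangle (i.removeNth c) y d₀
  rw [hammingDist_comm] at hcy
  have hbetween : hammingDist (i.removeNth c) d₀ =
      hammingDist (i.removeNth c) y + hammingDist y d₀ := by omega
  refine ⟨c, hc, by omega, ?_, ?_⟩
  · rw [apply_eq_of_hammingDist_eq_add hbetween (hyj ▸ ha), hyj]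
  · rw [apply_eq_of_hammingDist_eq_add hbetween (hyk ▸ hb), hyk]

theorem eq_of_apply_eq_of_removeNth_ne (hC : C.Pairwise (4 ≤ hammingDist · ·))
    (hc : c ∈ C) (hc' : c' ∈ C) (hkj : k ≠ j)
    (h3 : hammingDist (i.removeNth c) (i.removeNth c₀) = 3)
    (h3' : hammingDist (i.removeNth c') (i.removeNth c₀) = 3)
    (hj : i.removeNth c j = i.removeNth c' j) (hj₀ : i.removeNth c j ≠ i.removeNth c₀ j)
    (hk : i.removeNth c k ≠ i.removeNth c₀ k) (hk' : i.removeNth c' k ≠ i.removeNth c₀ k)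
    (hi : c i = c' i) : c = c' := by
  have := hammingDist_add_three_le hkj hj hj₀ hk hk'
  exact eq_of_apply_eq_of_hammingDist_removeNth_le hC hc hc' hi (by omega)

theorem exists_mem_removeNth_ne_apply_eq [Fintype α] (hC : C.Pairwise (4 ≤ hammingDist · ·))
    (hcov : ∀ y, ∃ c ∈ C, hammingDist y (i.removeNth c) ≤ 1) (hc₀ : c₀ ∈ C) (hkj : k ≠ j)
    {a σ : α} (ha : a ≠ i.removeNth c₀ j) (hσ : σ ≠ c₀ i) :
    ∃ c ∈ C, hammingDist (i.removeNth c) (i.removeNth c₀) = 3 ∧ i.removeNth c j = a ∧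
      i.removeNth c k ≠ i.removeNth c₀ k ∧ c i = σ := by
  choose g hgC hg3 hgj hgk using fun b (hb : b ∈ Finset.univ.erase (i.removeNth c₀ k)) =>
    exists_mem_removeNth_eq_of_covering hC hcov hc₀ hkj ha (Finset.ne_of_mem_erase hb)
  obtain ⟨b, hb, hσb⟩ := Finset.surj_on_of_inj_on_of_card_le (t := Finset.univ.erase (c₀ i))
    (fun b hb => g b hb i)
    (fun b hb => Finset.mem_erase.mpr
      ⟨apply_ne_of_hammingDist_removeNth_eq_three hC (hgC b hb) hc₀ (hg3 b hb),
        Finset.mem_univ _⟩)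
    (fun b₁ b₂ hb₁ hb₂ hi => by
      have := eq_of_apply_eq_of_removeNth_ne hC (hgC b₁ hb₁) (hgC b₂ hb₂) hkj (hg3 b₁ hb₁)
        (hg3 b₂ hb₂) ((hgj b₁ hb₁).trans (hgj b₂ hb₂).symm) ((hgj b₁ hb₁).trans_ne ha)
        ((hgk b₁ hb₁).trans_ne (Finset.ne_of_mem_erase hb₁))
        ((hgk b₂ hb₂).trans_ne (Finset.ne_of_mem_erase hb₂)) hi
      rw [← hgk b₁ hb₁, ← hgk b₂ hb₂, this])
    (by simp [Finset.card_erase_of_mem])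
    σ (Finset.mem_erase.mpr ⟨hσ, Finset.mem_univ _⟩)
  exact ⟨g b hb, hgC b hb, hg3 b hb, hgj b hb,
    (hgk b hb).trans_ne (Finset.ne_of_mem_erase hb), hσb.symm⟩

end Blocks

theorem odd_of_pairwise_four_le_hammingDist_of_covering {α : Type*} [DecidableEq α] [Fintype α]
    [Nontrivial α] {m : ℕ} (hm : 0 < m) {i : Fin (m + 1)} {C : Set (Fin (m + 1) → α)}
    (hC : C.Pairwise (4 ≤ hammingDist · ·))
    (hcov : ∀ y, ∃ c ∈ C, hammingDist y (i.removeNth c) ≤ 1) : Odd m := by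
  classical
  obtain ⟨c₀, hc₀, -⟩ := hcov (Classical.arbitrary _)
  let j : Fin m := ⟨0, hm⟩
  obtain ⟨a, ha⟩ := exists_ne (i.removeNth c₀ j)
  obtain ⟨σ, hσ⟩ := exists_ne (c₀ i)
  let S : Finset (Fin (m + 1) → α) :=
    {c | c ∈ C ∧ hammingDist (i.removeNth c) (i.removeNth c₀) = 3 ∧
      i.removeNth c j = a ∧ c i = σ}
  have hdouble := Finset.card_mul_eq_card_mul (fun c k => i.removeNth c k ≠ i.removeNth c₀ k)
    (s := S) (t := Finset.univ.erase j) (m := 2) (n := 1) ?_ ?_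
  · rw [Finset.card_erase_of_mem (Finset.mem_univ j), Finset.card_univ, Fintype.card_fin] at hdouble
    exact ⟨S.card, by omega⟩
  · intro c hc
    simp only [S, Finset.mem_filter, Finset.mem_univ, true_and] at hc
    rw [Finset.bipartiteAbove, Finset.filter_erase,
      Finset.card_erase_of_mem (by simpa [hc.2.2.1] using ha)]
    simp only [hammingDist] at hc
    omega
  · intro k hk
    obtain ⟨c, hc, h3, hj, hk₀, hi⟩ := exists_mem_removeNth_ne_apply_eq hC hcov hc₀
      (Finset.ne_of_mem_erase hk) ha hσ
    refine Finset.card_eq_one.mpr ⟨c, Finset.eq_singleton_iff_unique_mem.mpr ⟨?_, ?_⟩⟩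
    · simp [S, Finset.bipartiteBelow, hc, h3, hj, hk₀, hi]
    · intro c' hc'
      simp only [S, Finset.bipartiteBelow, Finset.mem_filter, Finset.mem_univ, true_and] at hc'
      obtain ⟨⟨hc', h3', hj', hi'⟩, hk'⟩ := hc'
      exact eq_of_apply_eq_of_removeNth_ne hC hc' hc (Finset.ne_of_mem_erase hk) h3' h3
        (hj'.trans hj.symm) (hj' ▸ ha) hk' hk₀ (hi'.trans hi.symm)

/-- Theorem 3(3) (Statement 18): for every `q ≥ 2` and every odd `n ≥ 3`, there are no
extended `1`-perfect codes in `H(n,q)`. -/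
theorem statement18 (n q : ℕ) (hq : 2 ≤ q) (hn : 3 ≤ n) (hodd : Odd n) :
    ¬ ∃ C : Set (Fin n → ZMod q), IsExtOnePerfectH n q C := by
  rintro ⟨C, -, hdist, i, hperf⟩
  obtain ⟨m, rfl⟩ : ∃ m, n = m + 1 := ⟨n - 1, by omega⟩
  have : NeZero q := ⟨by omega⟩
  have : Fact (1 < q) := ⟨by omega⟩
  have hC : C.Pairwise (4 ≤ hammingDist · ·) := fun c hc c' hc' hne => by
    simpa [hdist, hammingGraph_dist] using codeDist_le_dist (G := hammingGraph _ q) hc hc' hne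
  have hcov : ∀ y, ∃ c ∈ C, hammingDist y (i.removeNth c) ≤ 1 := fun y => by
    -- for `i : Fin (m + 1)`, `deleteCoord i` unfolds to `Fin.removeNth i`
    obtain ⟨_, ⟨c, hc, rfl⟩, hy⟩ := hperf.exists_hammingDist_le_one y
    exact ⟨c, hc, hy⟩
  exact Nat.odd_add_one.mp hodd
    (odd_of_pairwise_four_le_hammingDist_of_covering (by omega) hC hcov)
end
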